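/- Let f : ℝ → ℝ be continuous and rapidly decreasing. For every A > 1 there exists a constant C = C(A, f) > 0 such that for all real D ≥ 1 and T > 1: Σ_{(c,d): D ≤ c ≤ 2D, 1 ≤ d ≤ D, gcd(c,d)=1} Σ_{m ∈ ℤ, |d²/(4c) + m| ≥ 1/2} |f(T(d²/(4c) + m))| ≤ C · D² / T^{A}. -/

import Mathlib

noncomputable def keySumFar (f : ℝ → ℝ) (D T : ℝ) : ℝ :=
  ∑' c : ℕ, ∑' d : ℕ, ∑' m : ℤ,
    if D ≤ (c : ℝ) ∧ (c : ℝ) ≤ 2 * D ∧ 1 ≤ d ∧ (d : ℝ) ≤ D ∧ Nat.gcd c d = 1 ∧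
        (1/2 : ℝ) ≤ |(d : ℝ) ^ 2 / (4 * (c : ℝ)) + (m : ℝ)| then
      |f (T * ((d : ℝ) ^ 2 / (4 * (c : ℝ)) + (m : ℝ)))|
    else 0

/-- weight function `k ↦ 1` at `0`, `|k|^(-A)` elsewhere. -/
noncomputable def hwt (A : ℝ) (k : ℤ) : ℝ := if k = 0 then 1 else |(k : ℝ)| ^ (-A)

lemma hwt_nonneg (A : ℝ) (k : ℤ) : 0 ≤ hwt A k := by
  unfold hwt; split
  · norm_num
  · exact Real.rpow_nonneg (abs_nonneg _) _

lemma hwt_summable {A : ℝ} (hA : 1 < A) : Summable (hwt A) := by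
  have h1 := Real.summable_abs_int_rpow hA
  have h2 : Summable (fun k : ℤ => if k = 0 then (1:ℝ) else 0) := by
    apply summable_of_ne_finset_zero (s := {0})
    intro k hk
    simp only [Finset.mem_singleton] at hk
    simp [hk]
  refine (h1.add h2).congr fun k => ?_
  by_cases hk : k = 0
  · simp [hwt, hk, Real.zero_rpow (by linarith : -A ≠ 0)]
  · simp [hwt, hk]

lemma key_pointwise {A C₂ : ℝ} (hA : 1 < A) (hC₂0 : 0 ≤ C₂) {f : ℝ → ℝ}
    (hC₂ : ∀ x, (1 + |x|) ^ A * |f x| ≤ C₂) {T r : ℝ} (hT : 1 < T) (m : ℤ)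
    (hy : (1/2 : ℝ) ≤ |r + (m : ℝ)|) :
    |f (T * (r + (m : ℝ)))| ≤ C₂ / T ^ A * (2 ^ A * hwt A (m - round (-r))) := by
  have hT0 : (0:ℝ) < T := by linarith
  set y : ℝ := r + (m : ℝ) with hydef
  have hy0 : (0:ℝ) < |y| := by linarith
  have hA0 : (0:ℝ) ≤ A := by linarith
  have hTA : (0:ℝ) < T ^ A := Real.rpow_pos_of_pos hT0 A
  have hyA : (0:ℝ) < |y| ^ A := Real.rpow_pos_of_pos hy0 A
  -- step 1: decay bound
  have hp : (0:ℝ) < (1 + |T * y|) ^ A :=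
    Real.rpow_pos_of_pos (by positivity) A
  have step1 : |f (T * y)| ≤ C₂ / (1 + |T * y|) ^ A := by
    rw [le_div_iff₀ hp, mul_comm]
    exact hC₂ (T * y)
  -- step 2: denominator comparison
  have step2 : T ^ A * |y| ^ A ≤ (1 + |T * y|) ^ A := by
    rw [← Real.mul_rpow hT0.le (abs_nonneg y)]
    apply Real.rpow_le_rpow (by positivity) _ hA0
    have : |T * y| = T * |y| := by rw [abs_mul, abs_of_pos hT0]
    nlinarith [abs_nonneg (T * y)]
  have step3 : C₂ / (1 + |T * y|) ^ A ≤ C₂ / (T ^ A * |y| ^ A) := by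
    apply div_le_div_of_nonneg_left hC₂0 (by positivity) step2
  have step4 : C₂ / (T ^ A * |y| ^ A) = C₂ / T ^ A * (1 / |y| ^ A) := by
    field_simp
  -- step 5: the weight bound
  set n : ℤ := round (-r) with hn
  set k : ℤ := m - n with hk
  have step5 : 1 / |y| ^ A ≤ 2 ^ A * hwt A k := by
    have h2A : (0:ℝ) < 2 ^ A := Real.rpow_pos_of_pos two_pos A
    by_cases hk0 : k = 0
    · have hhw : hwt A k = 1 := by simp [hwt, hk0]
      rw [hhw, mul_one]
      have h1 : ((1:ℝ)/2) ^ A ≤ |y| ^ A := Real.rpow_le_rpow (by norm_num) hy hA0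
      have h2 : ((1:ℝ)/2) ^ A = (2 ^ A)⁻¹ := by
        rw [one_div, Real.inv_rpow (by norm_num : (0:ℝ) ≤ 2)]
      calc 1 / |y| ^ A ≤ 1 / ((1:ℝ)/2) ^ A := by
            apply div_le_div_of_nonneg_left one_pos.le _ h1
            rw [h2]; positivity
        _ = 2 ^ A := by rw [h2, one_div, inv_inv]
    · have hk1 : (1:ℝ) ≤ |(k : ℝ)| := by
        have := Int.one_le_abs hk0
        calc (1:ℝ) = ((1:ℤ):ℝ) := by norm_num
          _ ≤ ((|k| : ℤ) : ℝ) := by exact_mod_cast this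
          _ = |(k : ℝ)| := by push_cast; ring
      have hhw : hwt A k = (|(k:ℝ)| ^ A)⁻¹ := by
        rw [hwt, if_neg hk0, Real.rpow_neg (abs_nonneg _)]
      have hrn : |r + (n : ℝ)| ≤ 1/2 := by
        have := abs_sub_round (-r)
        rw [← hn] at this
        calc |r + (n:ℝ)| = |(-r) - (n:ℝ)| := by rw [← abs_neg]; ring_nf
          _ ≤ 1/2 := this
      have hky : |(k:ℝ)| / 2 ≤ |y| := by
        have hdecomp : y = (k:ℝ) + (r + (n:ℝ)) := by
          rw [hydef, hk]; push_cast; ring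
        have htri : |(k:ℝ)| ≤ |y| + |r + (n:ℝ)| := by
          calc |(k:ℝ)| = |y - (r + (n:ℝ))| := by rw [hdecomp]; ring_nf
            _ ≤ |y| + |r + (n:ℝ)| := abs_sub _ _
        linarith
      have hkpos : (0:ℝ) < |(k:ℝ)| := by linarith
      have h1 : (|(k:ℝ)| / 2) ^ A ≤ |y| ^ A :=
        Real.rpow_le_rpow (by positivity) hky hA0
      have h2 : (|(k:ℝ)| / 2) ^ A = |(k:ℝ)| ^ A / 2 ^ A :=
        Real.div_rpow (abs_nonneg _) (by norm_num : (0:ℝ) ≤ 2) A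
      have hkA : (0:ℝ) < |(k:ℝ)| ^ A := Real.rpow_pos_of_pos hkpos A
      calc 1 / |y| ^ A ≤ 1 / (|(k:ℝ)| / 2) ^ A := by
            apply div_le_div_of_nonneg_left one_pos.le _ h1
            rw [h2]; positivity
        _ = 2 ^ A / |(k:ℝ)| ^ A := by rw [h2, one_div_div]
        _ = 2 ^ A * hwt A k := by rw [hhw, div_eq_mul_inv]
  calc |f (T * y)| ≤ C₂ / (1 + |T * y|) ^ A := step1
    _ ≤ C₂ / (T ^ A * |y| ^ A) := step3
    _ = C₂ / T ^ A * (1 / |y| ^ A) := step4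
    _ ≤ C₂ / T ^ A * (2 ^ A * hwt A k) := by
        apply mul_le_mul_of_nonneg_left step5 (by positivity)

/-- If `f` is continuous and rapidly decreasing, then for every `A > 1` the far part of the
sum is `≪_{A,f} D²/T^A` for all `D ≥ 1`, `T > 1`. -/
theorem key_sum_far_bound
    (f : ℝ → ℝ) (hf : Continuous f)
    (hdecay : ∀ A : ℝ, 0 < A → ∃ C : ℝ, ∀ x : ℝ, (1 + |x|) ^ A * |f x| ≤ C)
    (A : ℝ) (hA : 1 < A) :
    ∃ C : ℝ, 0 < C ∧ ∀ D T : ℝ, 1 ≤ D → 1 < T →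
      keySumFar f D T ≤ C * D ^ 2 / T ^ A := by
  obtain ⟨C₁, hC₁⟩ := hdecay A (by linarith)
  set C₂ : ℝ := max C₁ 1 with hC₂def
  have hC₂pos : (0:ℝ) < C₂ := lt_of_lt_of_le one_pos (le_max_right _ _)
  have hC₂ : ∀ x, (1 + |x|) ^ A * |f x| ≤ C₂ := fun x => (hC₁ x).trans (le_max_left _ _)
  have hS : Summable (hwt A) := hwt_summable hA
  set S : ℝ := ∑' k, hwt A k with hSdef
  have hS1 : (1:ℝ) ≤ S := by
    have := Summable.le_tsum hS 0 (fun j _ => hwt_nonneg A j)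
    have h0 : hwt A 0 = 1 := by simp [hwt]
    rw [h0] at this
    exact this
  have h2A : (0:ℝ) < 2 ^ A := Real.rpow_pos_of_pos two_pos A
  set K : ℝ := C₂ * 2 ^ A * S with hKdef
  have hKpos : (0:ℝ) < K := mul_pos (mul_pos hC₂pos h2A) (by linarith)
  refine ⟨3 * K, by linarith, ?_⟩
  intro D T hD hT
  have hT0 : (0:ℝ) < T := by linarith
  have hTA : (0:ℝ) < T ^ A := Real.rpow_pos_of_pos hT0 A
  have hKT : (0:ℝ) ≤ K / T ^ A := le_of_lt (div_pos hKpos hTA)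
  -- the inner (m-) sum bound
  have inner : ∀ c d : ℕ,
      (∑' m : ℤ,
        if D ≤ (c : ℝ) ∧ (c : ℝ) ≤ 2 * D ∧ 1 ≤ d ∧ (d : ℝ) ≤ D ∧ Nat.gcd c d = 1 ∧
            (1/2 : ℝ) ≤ |(d : ℝ) ^ 2 / (4 * (c : ℝ)) + (m : ℝ)| then
          |f (T * ((d : ℝ) ^ 2 / (4 * (c : ℝ)) + (m : ℝ)))|
        else 0)
      ≤ if D ≤ (c : ℝ) ∧ (c : ℝ) ≤ 2 * D ∧ 1 ≤ d ∧ (d : ℝ) ≤ D then K / T ^ A else 0 := by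
    intro c d
    by_cases hcd : D ≤ (c : ℝ) ∧ (c : ℝ) ≤ 2 * D ∧ 1 ≤ d ∧ (d : ℝ) ≤ D
    · rw [if_pos hcd]
      set r : ℝ := (d : ℝ) ^ 2 / (4 * (c : ℝ)) with hr
      set n : ℤ := round (-r) with hn
      have hbs : Summable (fun m : ℤ => C₂ / T ^ A * (2 ^ A * hwt A (m - n))) := by
        apply Summable.mul_left
        apply Summable.mul_left
        have := ((Equiv.subRight n).summable_iff (f := hwt A)).mpr hS
        exact this
      have hpt : ∀ m : ℤ,
          (if D ≤ (c : ℝ) ∧ (c : ℝ) ≤ 2 * D ∧ 1 ≤ d ∧ (d : ℝ) ≤ D ∧ Nat.gcd c d = 1 ∧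
              (1/2 : ℝ) ≤ |r + (m : ℝ)| then |f (T * (r + (m : ℝ)))| else 0)
          ≤ C₂ / T ^ A * (2 ^ A * hwt A (m - n)) := by
        intro m
        split_ifs with hP
        · exact key_pointwise hA hC₂pos.le hC₂ hT m hP.2.2.2.2.2
        · exact mul_nonneg (div_nonneg hC₂pos.le hTA.le)
            (mul_nonneg h2A.le (hwt_nonneg A _))
      have hls : Summable (fun m : ℤ =>
          if D ≤ (c : ℝ) ∧ (c : ℝ) ≤ 2 * D ∧ 1 ≤ d ∧ (d : ℝ) ≤ D ∧ Nat.gcd c d = 1 ∧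
              (1/2 : ℝ) ≤ |r + (m : ℝ)| then |f (T * (r + (m : ℝ)))| else 0) := by
        apply Summable.of_nonneg_of_le _ hpt hbs
        intro m
        split_ifs
        · exact abs_nonneg _
        · exact le_refl 0
      calc (∑' m : ℤ,
          if D ≤ (c : ℝ) ∧ (c : ℝ) ≤ 2 * D ∧ 1 ≤ d ∧ (d : ℝ) ≤ D ∧ Nat.gcd c d = 1 ∧
              (1/2 : ℝ) ≤ |r + (m : ℝ)| then |f (T * (r + (m : ℝ)))| else 0)
          ≤ ∑' m : ℤ, C₂ / T ^ A * (2 ^ A * hwt A (m - n)) := Summable.tsum_le_tsum hpt hls hbs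
        _ = C₂ / T ^ A * (2 ^ A * ∑' m : ℤ, hwt A (m - n)) := by
            rw [tsum_mul_left, tsum_mul_left]
        _ = C₂ / T ^ A * (2 ^ A * S) := by
            congr 2
            have := (Equiv.subRight n).tsum_eq (hwt A)
            simpa [Function.comp] using this
        _ = K / T ^ A := by rw [hKdef]; ring
    · rw [if_neg hcd]
      have hz : ∀ m : ℤ,
          (if D ≤ (c : ℝ) ∧ (c : ℝ) ≤ 2 * D ∧ 1 ≤ d ∧ (d : ℝ) ≤ D ∧ Nat.gcd c d = 1 ∧
              (1/2 : ℝ) ≤ |(d : ℝ) ^ 2 / (4 * (c : ℝ)) + (m : ℝ)| then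
            |f (T * ((d : ℝ) ^ 2 / (4 * (c : ℝ)) + (m : ℝ)))| else 0) = 0 := by
        intro m
        apply if_neg
        intro hcon
        exact hcd ⟨hcon.1, hcon.2.1, hcon.2.2.1, hcon.2.2.2.1⟩
      rw [tsum_congr hz, tsum_zero]
  -- the middle (d-) sum bound
  have middle : ∀ c : ℕ,
      (∑' d : ℕ, ∑' m : ℤ,
        if D ≤ (c : ℝ) ∧ (c : ℝ) ≤ 2 * D ∧ 1 ≤ d ∧ (d : ℝ) ≤ D ∧ Nat.gcd c d = 1 ∧
            (1/2 : ℝ) ≤ |(d : ℝ) ^ 2 / (4 * (c : ℝ)) + (m : ℝ)| then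
          |f (T * ((d : ℝ) ^ 2 / (4 * (c : ℝ)) + (m : ℝ)))|
        else 0)
      ≤ if D ≤ (c : ℝ) ∧ (c : ℝ) ≤ 2 * D then D * (K / T ^ A) else 0 := by
    intro c
    apply tsum_le_of_sum_le'
    · split_ifs
      · exact mul_nonneg (by linarith) hKT
      · exact le_refl 0
    intro s
    have step1 : ∀ d ∈ s, (∑' m : ℤ,
        if D ≤ (c : ℝ) ∧ (c : ℝ) ≤ 2 * D ∧ 1 ≤ d ∧ (d : ℝ) ≤ D ∧ Nat.gcd c d = 1 ∧
            (1/2 : ℝ) ≤ |(d : ℝ) ^ 2 / (4 * (c : ℝ)) + (m : ℝ)| then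
          |f (T * ((d : ℝ) ^ 2 / (4 * (c : ℝ)) + (m : ℝ)))|
        else 0)
        ≤ if D ≤ (c : ℝ) ∧ (c : ℝ) ≤ 2 * D ∧ 1 ≤ d ∧ (d : ℝ) ≤ D then K / T ^ A else 0 :=
      fun d _ => inner c d
    refine (Finset.sum_le_sum step1).trans ?_
    by_cases hc : D ≤ (c : ℝ) ∧ (c : ℝ) ≤ 2 * D
    · rw [if_pos hc]
      have step2 : ∀ d ∈ s,
          (if D ≤ (c : ℝ) ∧ (c : ℝ) ≤ 2 * D ∧ 1 ≤ d ∧ (d : ℝ) ≤ D then K / T ^ A else 0)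
          ≤ (if 1 ≤ d ∧ (d : ℝ) ≤ D then K / T ^ A else 0) := by
        intro d _
        split_ifs with h1 h2 h2
        · exact le_refl _
        · exact absurd ⟨h1.2.2.1, h1.2.2.2⟩ h2
        · exact hKT
        · exact le_refl 0
      refine (Finset.sum_le_sum step2).trans ?_
      rw [← Finset.sum_filter, Finset.sum_const, nsmul_eq_mul]
      have hsub : s.filter (fun d : ℕ => 1 ≤ d ∧ (d : ℝ) ≤ D) ⊆ Finset.Icc 1 ⌊D⌋₊ := by
        intro d hd
        rw [Finset.mem_filter] at hd
        exact Finset.mem_Icc.mpr ⟨hd.2.1, Nat.le_floor hd.2.2⟩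
      have hcard : ((s.filter (fun d : ℕ => 1 ≤ d ∧ (d : ℝ) ≤ D)).card : ℝ) ≤ D := by
        have h1 := Finset.card_le_card hsub
        rw [Nat.card_Icc] at h1
        calc ((s.filter (fun d : ℕ => 1 ≤ d ∧ (d : ℝ) ≤ D)).card : ℝ)
            ≤ ((⌊D⌋₊ + 1 - 1 : ℕ) : ℝ) := by exact_mod_cast h1
          _ = (⌊D⌋₊ : ℝ) := by norm_num
          _ ≤ D := Nat.floor_le (by linarith)
      exact mul_le_mul_of_nonneg_right hcard hKT
    · rw [if_neg hc]
      apply le_of_eq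
      apply Finset.sum_eq_zero
      intro d _
      apply if_neg
      intro hcon
      exact hc ⟨hcon.1, hcon.2.1⟩
  -- the outer (c-) sum
  rw [keySumFar]
  apply tsum_le_of_sum_le'
  · have hD2 : (0:ℝ) < D ^ 2 := by nlinarith
    have : (0:ℝ) < 3 * K * D ^ 2 / T ^ A :=
      div_pos (mul_pos (mul_pos (by norm_num : (0:ℝ) < 3) hKpos) hD2) hTA
    linarith
  intro s
  refine (Finset.sum_le_sum (fun c (_ : c ∈ s) => middle c)).trans ?_
  rw [← Finset.sum_filter, Finset.sum_const, nsmul_eq_mul]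
  have hsub : s.filter (fun c : ℕ => D ≤ (c : ℝ) ∧ (c : ℝ) ≤ 2 * D) ⊆
      Finset.Icc ⌈D⌉₊ ⌊2 * D⌋₊ := by
    intro c hc
    rw [Finset.mem_filter] at hc
    exact Finset.mem_Icc.mpr ⟨Nat.ceil_le.mpr hc.2.1, Nat.le_floor hc.2.2⟩
  have hcard : ((s.filter (fun c : ℕ => D ≤ (c : ℝ) ∧ (c : ℝ) ≤ 2 * D)).card : ℝ) ≤ 3 * D := by
    have h1 := Finset.card_le_card hsub
    rw [Nat.card_Icc] at h1
    have h2 : (⌊2 * D⌋₊ + 1 - ⌈D⌉₊ : ℕ) ≤ ⌊2 * D⌋₊ + 1 := Nat.sub_le _ _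
    have h3 : (⌊2 * D⌋₊ : ℝ) ≤ 2 * D := Nat.floor_le (by linarith)
    calc ((s.filter (fun c : ℕ => D ≤ (c : ℝ) ∧ (c : ℝ) ≤ 2 * D)).card : ℝ)
        ≤ ((⌊2 * D⌋₊ + 1 : ℕ) : ℝ) := by exact_mod_cast h1.trans h2
      _ = (⌊2 * D⌋₊ : ℝ) + 1 := by push_cast; ring
      _ ≤ 2 * D + 1 := by linarith
      _ ≤ 3 * D := by linarith
  calc ((s.filter (fun c : ℕ => D ≤ (c : ℝ) ∧ (c : ℝ) ≤ 2 * D)).card : ℝ) * (D * (K / T ^ A))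
      ≤ 3 * D * (D * (K / T ^ A)) := by
        apply mul_le_mul_of_nonneg_right hcard (mul_nonneg (by linarith) hKT)
    _ = 3 * K * D ^ 2 / T ^ A := by ring
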